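/- Let N, m ≥ 1 be integers with 2m > N, let Ω ⊆ ℝ^N be open and bounded, and for multi-indices α, β with |α|, |β| ≤ m let a_{α,β} : Ω → ℂ be measurable with |a_{α,β}| ≤ M almost everywhere. Define Q(g) := Σ_{|α|≤m, |β|≤m} ∫_Ω a_{α,β}(y) D^β g(y) conj(D^α g(y)) dy for g ∈ C_c^∞(Ω), and assume Re Q(g) ≥ 0 for every g ∈ C_c^∞(Ω). Let ψ : ℝ^N → ℂ be smooth with closed support contained in the open unit ball and ψ(0) = 1. Then there is a constant c > 0, depending only on ψ, M, m and N, such that for every x ∈ Ω with d(x) ≤ 1 and every t ≥ d(x)^{2m}, where d(x) := dist(x, Ωᶜ): sup over nonzero g ∈ C_c^∞(Ω) of |g(x)|² / (t · Re Q(g) + ‖g‖₂²) ≥ c · t^{−1} · d(x)^{2m−N}. -/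

import Mathlib

open MeasureTheory

/-- The partial derivative `∂/∂yᵢ` of a function on `ℝ^N`. -/
noncomputable def pderiv' {N : ℕ} (i : Fin N)
    (f : EuclideanSpace ℝ (Fin N) → ℂ) : EuclideanSpace ℝ (Fin N) → ℂ :=
  fun y => fderiv ℝ f y (EuclideanSpace.single i 1)

/-- The multi-index partial derivative `D^α = ∂^{|α|}/∂y₁^{α₁}⋯∂y_N^{α_N}`. -/
noncomputable def mderiv {N : ℕ} (α : Fin N → ℕ)
    (f : EuclideanSpace ℝ (Fin N) → ℂ) : EuclideanSpace ℝ (Fin N) → ℂ :=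
  (List.finRange N).foldr (fun i g => (pderiv' i)^[α i] g) f

/-- The finite set of multi-indices `α` with `|α| ≤ m`, encoded with entries in
`Fin (m+1)` (any multi-index of total degree `≤ m` has all entries `≤ m`). -/
noncomputable def multiIndices (N m : ℕ) : Finset (Fin N → Fin (m + 1)) :=
  Finset.univ.filter (fun α => (∑ i, (α i : ℕ)) ≤ m)

/-- The quadratic form `Q(g) = Σ_{|α|≤m,|β|≤m} ∫_Ω a_{αβ} D^β g conj(D^α g)`. -/
noncomputable def quadForm {N : ℕ} (m : ℕ) (Ω : Set (EuclideanSpace ℝ (Fin N)))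
    (a : (Fin N → ℕ) → (Fin N → ℕ) → EuclideanSpace ℝ (Fin N) → ℂ)
    (g : EuclideanSpace ℝ (Fin N) → ℂ) : ℂ :=
  ∑ α ∈ multiIndices N m, ∑ β ∈ multiIndices N m,
    ∫ y in Ω, a (fun i => (α i : ℕ)) (fun i => (β i : ℕ)) y
      * mderiv (fun i => (β i : ℕ)) g y
      * (starRingEnd ℂ) (mderiv (fun i => (α i : ℕ)) g y)

/-- `g` is a test function for `Ω`, i.e. `g ∈ C_c^∞(Ω)`. -/
def IsTestFun {N : ℕ} (Ω : Set (EuclideanSpace ℝ (Fin N)))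
    (g : EuclideanSpace ℝ (Fin N) → ℂ) : Prop :=
  ContDiff ℝ (⊤ : ℕ∞) g ∧ HasCompactSupport g ∧ tsupport g ⊆ Ω


section aux
variable {N : ℕ}
local notation "E" => EuclideanSpace ℝ (Fin N)

lemma contDiff_pderiv' (i : Fin N) {f : E → ℂ} (hf : ContDiff ℝ (⊤ : ℕ∞) f) :
    ContDiff ℝ (⊤ : ℕ∞) (pderiv' i f) := by
  have h1 : ContDiff ℝ (⊤ : ℕ∞) (fderiv ℝ f) := hf.fderiv_right (by simp)
  exact (ContinuousLinearMap.apply ℝ ℂ (EuclideanSpace.single i (1:ℝ))).contDiff.comp h1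

lemma tsupport_pderiv' (i : Fin N) (f : E → ℂ) :
    tsupport (pderiv' i f) ⊆ tsupport f := by
  refine closure_minimal ?_ (isClosed_tsupport f)
  intro y hy
  have : fderiv ℝ f y ≠ 0 := by
    intro h; apply hy; simp [pderiv', h]
  exact support_fderiv_subset ℝ this

lemma pderiv'_const_mul (i : Fin N) {f : E → ℂ} (hf : ContDiff ℝ (⊤ : ℕ∞) f) (a : ℂ) :
    pderiv' i (fun y => a * f y) = fun y => a * pderiv' i f y := by
  funext y
  have hd : DifferentiableAt ℝ f y := (hf.differentiable (by simp)) y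
  simp [pderiv', fderiv_const_mul hd a]

lemma pderiv'_comp_affine (i : Fin N) {f : E → ℂ} (hf : ContDiff ℝ (⊤ : ℕ∞) f) (c : ℝ) (b : E) :
    pderiv' i (fun y => f (c • y + b)) = fun y => (c : ℂ) * pderiv' i f (c • y + b) := by
  funext y
  have hT : HasFDerivAt (fun y : E => c • y + b)
      (c • ContinuousLinearMap.id ℝ E) y :=
    ((hasFDerivAt_id y).const_smul c).add_const b
  have hfd : HasFDerivAt f (fderiv ℝ f (c • y + b)) (c • y + b) :=
    ((hf.differentiable (by simp)) _).hasFDerivAt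
  have hcomp := hfd.comp y hT
  have heq : (fun y : E => f (c • y + b)) = f ∘ fun y : E => c • y + b := rfl
  show fderiv ℝ (fun y : E => f (c • y + b)) y (EuclideanSpace.single i 1) = _
  rw [heq, hcomp.fderiv]
  simp [Complex.real_smul]
  left; rfl

lemma contDiff_iter (i : Fin N) (k : ℕ) {f : E → ℂ} (hf : ContDiff ℝ (⊤ : ℕ∞) f) :
    ContDiff ℝ (⊤ : ℕ∞) ((pderiv' i)^[k] f) := by
  induction k with
  | zero => simpa using hf
  | succ k ih => rw [Function.iterate_succ_apply']; exact contDiff_pderiv' i ih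

lemma tsupport_iter (i : Fin N) (k : ℕ) (f : E → ℂ) :
    tsupport ((pderiv' i)^[k] f) ⊆ tsupport f := by
  induction k with
  | zero => simp
  | succ k ih =>
      rw [Function.iterate_succ_apply']
      exact (tsupport_pderiv' i _).trans ih

lemma iter_const_mul (i : Fin N) (k : ℕ) {f : E → ℂ} (hf : ContDiff ℝ (⊤ : ℕ∞) f) (a : ℂ) :
    (pderiv' i)^[k] (fun y => a * f y) = fun y => a * (pderiv' i)^[k] f y := by
  induction k with
  | zero => simp
  | succ k ih =>
      rw [Function.iterate_succ_apply', Function.iterate_succ_apply', ih,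
        pderiv'_const_mul i (contDiff_iter i k hf) a]

lemma iter_comp_affine (i : Fin N) (k : ℕ) {f : E → ℂ} (hf : ContDiff ℝ (⊤ : ℕ∞) f)
    (c : ℝ) (b : E) :
    (pderiv' i)^[k] (fun y => f (c • y + b))
      = fun y => (c : ℂ) ^ k * (pderiv' i)^[k] f (c • y + b) := by
  induction k with
  | zero => simp
  | succ k ih =>
      have hc : ContDiff ℝ (⊤ : ℕ∞) (fun y : E => (pderiv' i)^[k] f (c • y + b)) :=
        (contDiff_iter i k hf).comp ((contDiff_const_smul c).add contDiff_const)
      rw [Function.iterate_succ_apply', ih,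
        pderiv'_const_mul i (f := fun y : E => (pderiv' i)^[k] f (c • y + b)) hc ((c:ℂ)^k),
        pderiv'_comp_affine i (contDiff_iter i k hf) c b]
      funext y
      rw [Function.iterate_succ_apply']
      ring

lemma contDiff_foldr (l : List (Fin N)) (α : Fin N → ℕ) {f : E → ℂ}
    (hf : ContDiff ℝ (⊤ : ℕ∞) f) :
    ContDiff ℝ (⊤ : ℕ∞) (l.foldr (fun i g => (pderiv' i)^[α i] g) f) := by
  induction l with
  | nil => simpa using hf
  | cons i l ih => exact contDiff_iter i (α i) ih

lemma tsupport_foldr (l : List (Fin N)) (α : Fin N → ℕ) (f : E → ℂ) :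
    tsupport (l.foldr (fun i g => (pderiv' i)^[α i] g) f) ⊆ tsupport f := by
  induction l with
  | nil => simp
  | cons i l ih => exact (tsupport_iter i (α i) _).trans ih

lemma foldr_comp_affine (l : List (Fin N)) (α : Fin N → ℕ) {f : E → ℂ}
    (hf : ContDiff ℝ (⊤ : ℕ∞) f) (c : ℝ) (b : E) :
    l.foldr (fun i g => (pderiv' i)^[α i] g) (fun y => f (c • y + b))
      = fun y => (c : ℂ) ^ (l.map α).sum
          * (l.foldr (fun i g => (pderiv' i)^[α i] g) f) (c • y + b) := by
  induction l with
  | nil => simp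
  | cons i l ih =>
      simp only [List.foldr_cons, ih, List.map_cons, List.sum_cons]
      have hc : ContDiff ℝ (⊤ : ℕ∞)
          (fun y : E => List.foldr (fun i g => (pderiv' i)^[α i] g) f l (c • y + b)) :=
        (contDiff_foldr l α hf).comp ((contDiff_const_smul c).add contDiff_const)
      rw [iter_const_mul i (α i)
          (f := fun y : E => List.foldr (fun i g => (pderiv' i)^[α i] g) f l (c • y + b)) hc,
        iter_comp_affine i (α i) (contDiff_foldr l α hf) c b]
      funext y
      ring

lemma mderiv_contDiff (α : Fin N → ℕ) {f : E → ℂ} (hf : ContDiff ℝ (⊤ : ℕ∞) f) :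
    ContDiff ℝ (⊤ : ℕ∞) (mderiv α f) := contDiff_foldr _ α hf

lemma mderiv_tsupport (α : Fin N → ℕ) (f : E → ℂ) :
    tsupport (mderiv α f) ⊆ tsupport f := tsupport_foldr _ α f

lemma mderiv_comp_affine (α : Fin N → ℕ) {f : E → ℂ} (hf : ContDiff ℝ (⊤ : ℕ∞) f)
    (c : ℝ) (b : E) :
    mderiv α (fun y => f (c • y + b))
      = fun y => (c : ℂ) ^ (∑ i, α i) * mderiv α f (c • y + b) := by
  rw [mderiv, mderiv, foldr_comp_affine _ α hf c b, Fin.sum_univ_def]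

lemma mderiv_zero_eq (f : E → ℂ) : mderiv (fun _ => 0) f = f := by
  rw [mderiv]
  generalize List.finRange N = l
  induction l with
  | nil => rfl
  | cons i l ih => simpa using ih

end aux

set_option maxHeartbeats 4000000 in
/-- **Large-time lower bound for the Green-type quantity**
`G_t(x,x) = sup_{0 ≠ g ∈ C_c^∞(Ω)} |g(x)|²/(t·Re Q(g) + ‖g‖₂²) ≥ c·t⁻¹·d(x)^{2m−N}`
for all `x ∈ Ω` with `d(x) ≤ 1` and all `t ≥ d(x)^{2m}`; the supremum is witnessed by
an explicit test function. This exhibits the boundary decay factor `d(x)^{2m−N}`. -/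
theorem green_lower_bound_large_time
    (N m : ℕ) (hN : 1 ≤ N) (hm : 1 ≤ m) (h2m : N < 2 * m)
    (Ω : Set (EuclideanSpace ℝ (Fin N))) (hΩo : IsOpen Ω)
    (hΩb : Bornology.IsBounded Ω)
    (M : ℝ) (hM : 0 < M)
    (a : (Fin N → ℕ) → (Fin N → ℕ) → EuclideanSpace ℝ (Fin N) → ℂ)
    (ha_meas : ∀ α β : Fin N → ℕ, Measurable (a α β))
    (ha_bd : ∀ α β : Fin N → ℕ, ∀ᵐ y ∂(volume.restrict Ω), ‖a α β y‖ ≤ M)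
    (hQpos : ∀ g : EuclideanSpace ℝ (Fin N) → ℂ, IsTestFun Ω g →
      0 ≤ (quadForm m Ω a g).re)
    (ψ : EuclideanSpace ℝ (Fin N) → ℂ) (hψ : ContDiff ℝ (⊤ : ℕ∞) ψ)
    (hψsupp : tsupport ψ ⊆ Metric.ball (0 : EuclideanSpace ℝ (Fin N)) 1)
    (hψ0 : ψ 0 = 1) :
    ∃ c : ℝ, 0 < c ∧
      ∀ x ∈ Ω, Metric.infDist x Ωᶜ ≤ 1 →
        ∀ t : ℝ, Metric.infDist x Ωᶜ ^ (2 * m) ≤ t →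
        ∃ g : EuclideanSpace ℝ (Fin N) → ℂ, IsTestFun Ω g ∧ g ≠ 0 ∧
          c * t⁻¹ * Metric.infDist x Ωᶜ ^ (2 * m - N)
            ≤ ‖g x‖ ^ 2 / (t * (quadForm m Ω a g).re + ∫ y in Ω, ‖g y‖ ^ 2) := by
  classical
  have hψc : HasCompactSupport ψ :=
    HasCompactSupport.intro (isCompact_closedBall (0 : EuclideanSpace ℝ (Fin N)) 1)
      (fun z hz => image_eq_zero_of_notMem_tsupport
        (fun h => hz (Metric.ball_subset_closedBall (hψsupp h))))
  -- uniform bound K on all derivatives of ψ of order ≤ m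
  have hFcont : Continuous (fun z : EuclideanSpace ℝ (Fin N) =>
      ∑ α ∈ multiIndices N m, ‖mderiv (fun i => (α i : ℕ)) ψ z‖) :=
    continuous_finset_sum _ (fun α _ => ((mderiv_contDiff _ hψ).continuous).norm)
  have hFsupp : HasCompactSupport (fun z : EuclideanSpace ℝ (Fin N) =>
      ∑ α ∈ multiIndices N m, ‖mderiv (fun i => (α i : ℕ)) ψ z‖) := by
    apply HasCompactSupport.intro hψc
    intro z hz
    apply Finset.sum_eq_zero
    intro α _
    have hzz : z ∉ tsupport (mderiv (fun i => (α i : ℕ)) ψ) :=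
      fun h => hz (mderiv_tsupport _ ψ h)
    simp [image_eq_zero_of_notMem_tsupport hzz]
  obtain ⟨z₀, hz₀⟩ := hFcont.exists_forall_ge_of_hasCompactSupport hFsupp
  set K := max (∑ α ∈ multiIndices N m, ‖mderiv (fun i => (α i : ℕ)) ψ z₀‖) 1 with hKdef
  have hK1 : (1:ℝ) ≤ K := le_max_right _ _
  have hK0 : (0:ℝ) < K := lt_of_lt_of_le one_pos hK1
  have hKbound : ∀ α ∈ multiIndices N m, ∀ z : EuclideanSpace ℝ (Fin N),
      ‖mderiv (fun i => (α i : ℕ)) ψ z‖ ≤ K := by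
    intro α hα z
    have h1 : ‖mderiv (fun i => (α i : ℕ)) ψ z‖
        ≤ ∑ β ∈ multiIndices N m, ‖mderiv (fun i => (β i : ℕ)) ψ z‖ := by
      apply Finset.single_le_sum (f := fun β => ‖mderiv (fun i => (β i : ℕ)) ψ z‖)
        (fun β _ => norm_nonneg _) hα
    refine h1.trans (le_trans ?_ (le_max_left _ _))
    exact hz₀ z
  have hzeroS : (fun _ : Fin N => (0 : Fin (m+1))) ∈ multiIndices N m := by
    rw [multiIndices, Finset.mem_filter]
    exact ⟨Finset.mem_univ _, by simp⟩
  have hψK : ∀ z, ‖ψ z‖ ≤ K := by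
    intro z
    have h := hKbound _ hzeroS z
    have h0 : mderiv (fun i : Fin N => (((fun _ : Fin N => (0 : Fin (m+1))) i : Fin (m+1)) : ℕ)) ψ
        = ψ := by
      have : (fun i : Fin N => (((0 : Fin (m+1))) : ℕ)) = fun _ : Fin N => 0 := by
        funext i; simp
      rw [this, mderiv_zero_eq]
    rwa [h0] at h
  -- the volume of the unit ball
  haveI : Nonempty (Fin N) := ⟨⟨0, hN⟩⟩
  set ω := (volume (Metric.ball (0 : EuclideanSpace ℝ (Fin N)) 1)).toReal with hωdef
  have hω0 : 0 < ω :=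
    ENNReal.toReal_pos (Metric.measure_ball_pos _ _ one_pos).ne' measure_ball_lt_top.ne
  set n := (multiIndices N m).card with hndef
  set C := ((n:ℝ)^2 * M * K^2 + K^2) * ω with hCdef
  have hC0 : 0 < C := by
    apply mul_pos _ hω0
    have h1 : 0 ≤ (n:ℝ)^2 * M * K^2 :=
      mul_nonneg (mul_nonneg (by positivity) hM.le) (by positivity)
    nlinarith [hK0]
  refine ⟨C⁻¹, inv_pos.2 hC0, ?_⟩
  intro x hx hd1 t ht
  set r := Metric.infDist x Ωᶜ with hrdef
  -- the complement is nonempty and r > 0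
  obtain ⟨R, hR⟩ := hΩb.subset_closedBall 0
  have hΩc_ne : Ωᶜ.Nonempty := by
    refine ⟨EuclideanSpace.single (⟨0, hN⟩ : Fin N) (|R| + 1), fun hmem => ?_⟩
    have h1 := hR hmem
    rw [Metric.mem_closedBall, dist_zero_right, EuclideanSpace.norm_single,
      Real.norm_eq_abs] at h1
    have h2 := le_abs_self R
    have h3 := abs_nonneg R
    rw [abs_of_nonneg (by linarith : (0:ℝ) ≤ |R| + 1)] at h1
    linarith
  have hr0 : 0 < r :=
    (hΩo.isClosed_compl.notMem_iff_infDist_pos hΩc_ne).1 (fun h => h hx)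
  have ht0 : 0 < t := lt_of_lt_of_le (pow_pos hr0 _) ht
  set c := r⁻¹ with hcdef
  have hc0 : 0 < c := inv_pos.2 hr0
  have hc1 : (1:ℝ) ≤ c := by
    rw [hcdef, le_inv_comm₀ one_pos hr0]
    simpa using hd1
  set b := -(c • x) with hbdef
  set g := fun y : EuclideanSpace ℝ (Fin N) => ψ (c • y + b) with hgdef
  have hgx : g x = 1 := by
    have : c • x + b = 0 := by rw [hbdef]; abel
    rw [hgdef]; simp only [this, hψ0]
  -- ball x r ⊆ Ω
  have hball : Metric.ball x r ⊆ Ω := by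
    intro y hy
    by_contra hyΩ
    have h1 : r ≤ dist x y := Metric.infDist_le_dist_of_mem hyΩ
    rw [dist_comm] at h1
    exact absurd (Metric.mem_ball.1 hy) (not_lt.2 h1)
  have hTcont : Continuous (fun y : EuclideanSpace ℝ (Fin N) => c • y + b) :=
    (continuous_const_smul c).add continuous_const
  have hsupp : tsupport g ⊆ Metric.ball x r := by
    have h1 : tsupport g ⊆ (fun y : EuclideanSpace ℝ (Fin N) => c • y + b) ⁻¹' tsupport ψ := by
      apply closure_minimal ?_ (IsClosed.preimage hTcont (isClosed_tsupport ψ))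
      intro y hy
      exact subset_closure hy
    intro y hy
    have h2 : c • y + b ∈ Metric.ball (0 : EuclideanSpace ℝ (Fin N)) 1 := hψsupp (h1 hy)
    have heq : c • y + b = c • (y - x) := by rw [hbdef, smul_sub]; abel
    rw [heq, mem_ball_zero_iff, norm_smul,
      Real.norm_of_nonneg hc0.le, hcdef, inv_mul_eq_div, div_lt_one hr0] at h2
    rw [Metric.mem_ball, dist_eq_norm]
    exact h2
  have hgsmooth : ContDiff ℝ (⊤ : ℕ∞) g :=
    hψ.comp ((contDiff_const_smul c).add contDiff_const)
  have hgcs : HasCompactSupport g :=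
    HasCompactSupport.intro (isCompact_closedBall x r)
      (fun z hz => image_eq_zero_of_notMem_tsupport
        (fun h => hz (Metric.ball_subset_closedBall (hsupp h))))
  have hgtest : IsTestFun Ω g := ⟨hgsmooth, hgcs, hsupp.trans hball⟩
  -- bounds on derivatives of g
  have hmg_eq : ∀ α : Fin N → ℕ,
      mderiv α g = fun y => (c : ℂ) ^ (∑ i, α i) * mderiv α ψ (c • y + b) :=
    fun α => mderiv_comp_affine α hψ c b
  have hmg_bd : ∀ α ∈ multiIndices N m, ∀ y : EuclideanSpace ℝ (Fin N),
      ‖mderiv (fun i => (α i : ℕ)) g y‖ ≤ c ^ m * K := by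
    intro α hα y
    rw [hmg_eq]
    have hsm : (∑ i, ((α i : ℕ))) ≤ m := by
      have := hα
      rw [multiIndices, Finset.mem_filter] at this
      exact this.2
    calc ‖(c:ℂ) ^ (∑ i, (α i : ℕ)) * mderiv (fun i => (α i : ℕ)) ψ (c • y + b)‖
        = c ^ (∑ i, (α i : ℕ)) * ‖mderiv (fun i => (α i : ℕ)) ψ (c • y + b)‖ := by
          rw [norm_mul, norm_pow, Complex.norm_real, Real.norm_of_nonneg hc0.le]
      _ ≤ c ^ m * K := by
          apply mul_le_mul (pow_le_pow_right₀ hc1 hsm) (hKbound α hα _) (norm_nonneg _)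
            (by positivity)
  have hmg_zero : ∀ α : Fin N → ℕ, ∀ y, y ∉ Metric.ball x r → mderiv α g y = 0 := by
    intro α y hy
    exact image_eq_zero_of_notMem_tsupport (fun h => hy (hsupp (mderiv_tsupport α g h)))
  -- volume of ball x r
  have hfr : Module.finrank ℝ (EuclideanSpace ℝ (Fin N)) = N := finrank_euclideanSpace_fin
  have hvol : (volume (Metric.ball x r)).toReal = r ^ N * ω := by
    rw [Measure.addHaar_ball volume x hr0.le, hfr, ENNReal.toReal_mul,
      ENNReal.toReal_ofReal (pow_nonneg hr0.le N)]
  have hrestr : ((volume.restrict Ω) (Metric.ball x r)).toReal = r ^ N * ω := by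
    rw [Measure.restrict_apply measurableSet_ball, Set.inter_eq_left.2 hball, hvol]
  -- per-term bound on the quadratic form
  set B := M * (K ^ 2 * (c ^ m) ^ 2) with hBdef
  have hB0 : 0 ≤ B := mul_nonneg hM.le (by positivity)
  have hterm : ∀ α ∈ multiIndices N m, ∀ β ∈ multiIndices N m,
      ‖∫ y in Ω, a (fun i => (α i : ℕ)) (fun i => (β i : ℕ)) y
        * mderiv (fun i => (β i : ℕ)) g y
        * (starRingEnd ℂ) (mderiv (fun i => (α i : ℕ)) g y)‖ ≤ B * (r ^ N * ω) := by
    intro α hα β hβ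
    calc ‖∫ y in Ω, a (fun i => (α i : ℕ)) (fun i => (β i : ℕ)) y
          * mderiv (fun i => (β i : ℕ)) g y
          * (starRingEnd ℂ) (mderiv (fun i => (α i : ℕ)) g y)‖
        ≤ ∫ y in Ω, ‖a (fun i => (α i : ℕ)) (fun i => (β i : ℕ)) y
          * mderiv (fun i => (β i : ℕ)) g y
          * (starRingEnd ℂ) (mderiv (fun i => (α i : ℕ)) g y)‖ :=
          norm_integral_le_integral_norm _
      _ ≤ ∫ y in Ω, (Metric.ball x r).indicator (fun _ => B) y := by
          apply integral_mono_of_nonneg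
          · exact Filter.Eventually.of_forall (fun y => norm_nonneg _)
          · rw [integrable_indicator_iff measurableSet_ball]
            apply integrableOn_const (ne_of_lt ?_)
            exact lt_of_le_of_lt (Measure.restrict_le_self _) measure_ball_lt_top
          · filter_upwards [ha_bd (fun i => (α i : ℕ)) (fun i => (β i : ℕ))] with y hy
            by_cases hyb : y ∈ Metric.ball x r
            · rw [Set.indicator_of_mem hyb]
              rw [norm_mul, norm_mul, RingHomIsometric.norm_map]
              calc ‖a (fun i => (α i : ℕ)) (fun i => (β i : ℕ)) y‖
                    * ‖mderiv (fun i => (β i : ℕ)) g y‖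
                    * ‖mderiv (fun i => (α i : ℕ)) g y‖
                  ≤ M * (c ^ m * K) * (c ^ m * K) := by
                    apply mul_le_mul (mul_le_mul hy (hmg_bd β hβ y) (norm_nonneg _) hM.le)
                      (hmg_bd α hα y) (norm_nonneg _)
                    positivity
                _ = B := by rw [hBdef]; ring
            · rw [Set.indicator_of_notMem hyb, hmg_zero _ y hyb]
              simp
      _ = B * (r ^ N * ω) := by
          rw [integral_indicator_const _ measurableSet_ball, measureReal_def, hrestr, smul_eq_mul, mul_comm]
  -- bound on Re Q(g)
  have hQbd : (quadForm m Ω a g).re ≤ (n:ℝ)^2 * (B * (r ^ N * ω)) := by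
    have h1 : ‖quadForm m Ω a g‖ ≤ (n:ℝ)^2 * (B * (r ^ N * ω)) := by
      rw [quadForm]
      calc ‖∑ α ∈ multiIndices N m, ∑ β ∈ multiIndices N m, ∫ y in Ω, a (fun i => (α i : ℕ)) (fun i => (β i : ℕ)) y
            * mderiv (fun i => (β i : ℕ)) g y
            * (starRingEnd ℂ) (mderiv (fun i => (α i : ℕ)) g y)‖
          ≤ ∑ α ∈ multiIndices N m, ∑ β ∈ multiIndices N m, ‖∫ y in Ω, a (fun i => (α i : ℕ)) (fun i => (β i : ℕ)) y
            * mderiv (fun i => (β i : ℕ)) g y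
            * (starRingEnd ℂ) (mderiv (fun i => (α i : ℕ)) g y)‖ :=
            (norm_sum_le _ _).trans (Finset.sum_le_sum (fun α _ => norm_sum_le _ _))
        _ ≤ ∑ _α ∈ multiIndices N m, ∑ _β ∈ multiIndices N m, B * (r ^ N * ω) :=
            Finset.sum_le_sum (fun α hα => Finset.sum_le_sum (fun β hβ => hterm α hα β hβ))
        _ = (n:ℝ)^2 * (B * (r ^ N * ω)) := by
            rw [Finset.sum_const, Finset.sum_const, smul_smul, nsmul_eq_mul,
              Nat.cast_mul, ← hndef]
            ring
    exact (Complex.re_le_norm _).trans h1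
  -- bounds on the L² norm
  have hg2int : Integrable (fun y => ‖g y‖^2) (volume.restrict Ω) := by
    apply Integrable.restrict
    apply Continuous.integrable_of_hasCompactSupport ((hgsmooth.continuous.norm).pow 2)
    exact hgcs.comp_left (g := fun z : ℂ => ‖z‖^2) (by simp)
  have hI2_ub : (∫ y in Ω, ‖g y‖^2) ≤ K^2 * (r ^ N * ω) := by
    calc (∫ y in Ω, ‖g y‖^2)
        ≤ ∫ y in Ω, (Metric.ball x r).indicator (fun _ => K^2) y := by
          apply integral_mono_of_nonneg
          · exact Filter.Eventually.of_forall (fun y => sq_nonneg _)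
          · rw [integrable_indicator_iff measurableSet_ball]
            apply integrableOn_const (ne_of_lt ?_)
            exact lt_of_le_of_lt (Measure.restrict_le_self _) measure_ball_lt_top
          · apply Filter.Eventually.of_forall
            intro y
            by_cases hyb : y ∈ Metric.ball x r
            · rw [Set.indicator_of_mem hyb]
              have : ‖g y‖ ≤ K := hψK _
              calc ‖g y‖^2 ≤ K^2 := by nlinarith [norm_nonneg (g y)]
                _ = K^2 := rfl
            · rw [Set.indicator_of_notMem hyb]
              have hgy : g y = 0 :=
                image_eq_zero_of_notMem_tsupport (fun h => hyb (hsupp h))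
              simp [hgy]
      _ = K^2 * (r ^ N * ω) := by
          rw [integral_indicator_const _ measurableSet_ball, measureReal_def, hrestr, smul_eq_mul, mul_comm]
  -- lower bound on the L² norm
  have hI2_pos : 0 < ∫ y in Ω, ‖g y‖^2 := by
    have hU : IsOpen (g ⁻¹' Metric.ball (1:ℂ) (1/2) ∩ Ω) :=
      (hgsmooth.continuous.isOpen_preimage _ Metric.isOpen_ball).inter hΩo
    have hxU : x ∈ g ⁻¹' Metric.ball (1:ℂ) (1/2) ∩ Ω := by
      constructor
      · rw [Set.mem_preimage, hgx]
        exact Metric.mem_ball_self (by norm_num)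
      · exact hx
    obtain ⟨δ, hδ0, hδ⟩ := Metric.isOpen_iff.1 hU x hxU
    have key : (∫ y in Ω, (Metric.ball x δ).indicator (fun _ => (1/4 : ℝ)) y)
        ≤ ∫ y in Ω, ‖g y‖^2 := by
      apply integral_mono_of_nonneg
      · exact Filter.Eventually.of_forall fun y =>
          Set.indicator_nonneg (fun _ _ => by norm_num) y
      · exact hg2int
      · apply Filter.Eventually.of_forall
        intro y
        by_cases hyb : y ∈ Metric.ball x δ
        · rw [Set.indicator_of_mem hyb]
          have h1 := (hδ hyb).1
          rw [Set.mem_preimage, Metric.mem_ball] at h1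
          have h2 : (1:ℝ) - 1/2 ≤ ‖g y‖ := by
            have h3 : ‖(1:ℂ)‖ - ‖g y‖ ≤ ‖(1:ℂ) - g y‖ := norm_sub_norm_le 1 (g y)
            rw [norm_sub_rev, ← dist_eq_norm] at h3
            simp only [norm_one] at h3
            linarith
          nlinarith
        · rw [Set.indicator_of_notMem hyb]
          exact sq_nonneg _
    have hδΩ : Metric.ball x δ ⊆ Ω := fun y hy => (hδ hy).2
    have : (∫ y in Ω, (Metric.ball x δ).indicator (fun _ => (1/4 : ℝ)) y)
        = ((volume (Metric.ball x δ)).toReal) * (1/4) := by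
      rw [integral_indicator_const _ measurableSet_ball, measureReal_def,
        Measure.restrict_apply measurableSet_ball, Set.inter_eq_left.2 hδΩ, smul_eq_mul]
    have hposδ : 0 < (volume (Metric.ball x δ)).toReal :=
      ENNReal.toReal_pos (Metric.measure_ball_pos _ _ hδ0).ne' measure_ball_lt_top.ne
    calc (0:ℝ) < ((volume (Metric.ball x δ)).toReal) * (1/4) := by positivity
      _ = _ := this.symm
      _ ≤ _ := key
  -- final arithmetic
  refine ⟨g, hgtest, ?_, ?_⟩
  · intro h
    have : g x = 0 := by rw [h]; rfl
    rw [hgx] at this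
    exact one_ne_zero this
  · have hgx2 : ‖g x‖^2 = 1 := by rw [hgx]; simp
    have hReQ0 : 0 ≤ (quadForm m Ω a g).re := hQpos g hgtest
    have hD0 : 0 < t * (quadForm m Ω a g).re + ∫ y in Ω, ‖g y‖^2 :=
      add_pos_of_nonneg_of_pos (mul_nonneg ht0.le hReQ0) hI2_pos
    -- power identities
    have hrpow_pos : (0:ℝ) < r ^ (2*m - N) := pow_pos hr0 _
    have hsplit : r ^ (2*m) = r ^ N * r ^ (2*m - N) := by
      rw [← pow_add, Nat.add_sub_cancel' h2m.le]
    have hcm : (c ^ m)^2 = (r ^ (2*m))⁻¹ := by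
      rw [hcdef, ← pow_mul, mul_comm m 2, inv_pow]
    have hkey : (c ^ m)^2 * r ^ N = (r ^ (2*m - N))⁻¹ := by
      rw [hcm, hsplit]
      field_simp
    -- 1 ≤ t * (c^m)^2
    have htc : (1:ℝ) ≤ t * (c ^ m)^2 := by
      rw [hcm]
      calc (1:ℝ) = r ^ (2*m) * (r ^ (2*m))⁻¹ := by
            field_simp
        _ ≤ t * (r ^ (2*m))⁻¹ := by
            apply mul_le_mul_of_nonneg_right ht (by positivity)
    have hDle : t * (quadForm m Ω a g).re + (∫ y in Ω, ‖g y‖^2)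
        ≤ C * t * (r ^ (2*m - N))⁻¹ := by
      have h1 : t * (quadForm m Ω a g).re ≤ t * ((n:ℝ)^2 * (B * (r ^ N * ω))) :=
        mul_le_mul_of_nonneg_left hQbd ht0.le
      have h2 : (∫ y in Ω, ‖g y‖^2) ≤ K^2 * (r ^ N * ω) * (t * (c ^ m)^2) := by
        calc (∫ y in Ω, ‖g y‖^2) ≤ K^2 * (r ^ N * ω) := hI2_ub
          _ = K^2 * (r ^ N * ω) * 1 := by ring
          _ ≤ K^2 * (r ^ N * ω) * (t * (c ^ m)^2) := by
              apply mul_le_mul_of_nonneg_left htc (by positivity)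
      have h3 : t * ((n:ℝ)^2 * (B * (r ^ N * ω))) + K^2 * (r ^ N * ω) * (t * (c ^ m)^2)
          = C * t * ((c ^ m)^2 * r ^ N) := by
        rw [hBdef, hCdef]; ring
      rw [← hkey]
      linarith
    have harith : C⁻¹ * t⁻¹ * r ^ (2*m - N) = 1 / (C * t * (r ^ (2*m - N))⁻¹) := by
      have h1 : C ≠ 0 := hC0.ne'
      have h2 : t ≠ 0 := ht0.ne'
      have h3 : r ^ (2*m - N) ≠ 0 := hrpow_pos.ne'
      field_simp
    rw [hgx2, harith]
    exact one_div_le_one_div_of_le hD0 hDle
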